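/- Decay of the Glassey–Strauss magnetic bulk kernel: for every v ∈ ℝ³ and every ω ∈ ℝ³ with |ω| = 1, one has | ω × v̂ | · (1 − |v̂|²) / (1 + v̂·ω)² ≤ 8 √(1 + |v|²). -/

import Mathlib

open MeasureTheory Set

noncomputable section

/-- Physical space `ℝ³`, realized as functions `Fin 3 → ℝ`. -/
abbrev V3 : Type := Fin 3 → ℝ

/-- Euclidean inner product on `ℝ³`. -/
def dot3 (a b : V3) : ℝ := a 0 * b 0 + a 1 * b 1 + a 2 * b 2

/-- Euclidean norm on `ℝ³`. -/
def enorm3 (a : V3) : ℝ := Real.sqrt (dot3 a a)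

/-- Cross product on `ℝ³`. -/
def cross3 (a b : V3) : V3 :=
  ![a 1 * b 2 - a 2 * b 1, a 2 * b 0 - a 0 * b 2, a 0 * b 1 - a 1 * b 0]

/-- `⟨v⟩ = √(1 + |v|²)`. -/
def jap (v : V3) : ℝ := Real.sqrt (1 + dot3 v v)

/-- Relativistic velocity `v̂ = v / ⟨v⟩`. -/
def vhat (v : V3) : V3 := (jap v)⁻¹ • v

/-- The open upper half space `Ω = {x ∈ ℝ³ : x₃ > 0}`. -/
def halfSpace : Set V3 := {x : V3 | 0 < x 2}

/-- Embedding of the boundary `∂Ω ≃ ℝ²` into `ℝ³`. -/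
def bdryPt (y : ℝ × ℝ) : V3 := ![y.1, y.2, 0]

/-- Projection `(x₁,x₂,x₃) ↦ (x₁,x₂,0)` onto the boundary. -/
def proj0 (x : V3) : V3 := ![x 0, x 1, 0]

/-- Reflection `x̄ = (x₁,x₂,−x₃)`. -/
def refl3 (x : V3) : V3 := ![x 0, x 1, -(x 2)]

/-- Time derivative `∂ₜ` of a space-time function. -/
def pdt (f : ℝ × V3 → ℝ) : ℝ × V3 → ℝ := fun q => fderiv ℝ f q (1, 0)

/-- Spatial partial derivative `∂_{xᵢ}` of a space-time function. -/
def pdx (i : Fin 3) (f : ℝ × V3 → ℝ) : ℝ × V3 → ℝ := fun q => fderiv ℝ f q (0, Pi.single i 1)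

/-- Partial derivative `∂_{xᵢ}` of a function on `ℝ³`. -/
def sdx (i : Fin 3) (u : V3 → ℝ) : V3 → ℝ := fun x => fderiv ℝ u x (Pi.single i 1)

/-- `i`-th component of a space-time vector field. -/
def comp3 (F : ℝ × V3 → V3) (i : Fin 3) : ℝ × V3 → ℝ := fun q => F q i

/-- Spatial divergence of a space-time vector field. -/
def divX (F : ℝ × V3 → V3) (q : ℝ × V3) : ℝ := ∑ i : Fin 3, pdx i (comp3 F i) q

/-- Spatial curl of a space-time vector field. -/
def curlX (F : ℝ × V3 → V3) (q : ℝ × V3) : V3 :=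
  ![pdx 1 (comp3 F 2) q - pdx 2 (comp3 F 1) q,
    pdx 2 (comp3 F 0) q - pdx 0 (comp3 F 2) q,
    pdx 0 (comp3 F 1) q - pdx 1 (comp3 F 0) q]

/-- Curl of a vector field on `ℝ³`. -/
def curlS (F : V3 → V3) (x : V3) : V3 :=
  ![sdx 1 (fun z => F z 2) x - sdx 2 (fun z => F z 1) x,
    sdx 2 (fun z => F z 0) x - sdx 0 (fun z => F z 2) x,
    sdx 0 (fun z => F z 1) x - sdx 1 (fun z => F z 0) x]

/-- Divergence of a vector field on `ℝ³`. -/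
def divS (F : V3 → V3) (x : V3) : ℝ := ∑ i : Fin 3, sdx i (fun z => F z i) x

/-- Spatial Laplacian of a space-time function. -/
def lapST (f : ℝ × V3 → ℝ) (q : ℝ × V3) : ℝ := ∑ i : Fin 3, pdx i (pdx i f) q

/-- Laplacian of a function on `ℝ³`. -/
def lapS (u : V3 → ℝ) (x : V3) : ℝ := ∑ i : Fin 3, sdx i (sdx i u) x

/-- Open space-time domain `(0,T) × Ω`. -/
def stDom (T : ℝ) : Set (ℝ × V3) := Ioo (0 : ℝ) T ×ˢ halfSpace

/-- Closed space-time domain `[0,T] × Ω̄`. -/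
def stDomCl (T : ℝ) : Set (ℝ × V3) := Icc (0 : ℝ) T ×ˢ closure halfSpace

/-- Lateral boundary domain `(0,T) × ∂Ω`, with `∂Ω ≃ ℝ²`. -/
def bDom (T : ℝ) : Set (ℝ × (ℝ × ℝ)) := Ioo (0 : ℝ) T ×ˢ (univ : Set (ℝ × ℝ))

/-!
Write `J = ⟨v⟩`, `p = v·ω` and `B = |ω × v|²`. Pulling the factor `1/J` out of `v̂`, the kernel
equals `√B / (J (J + p)²)`, and for a unit vector `ω` Lagrange's identity gives
`B = |v|² - p²`, i.e. `(J + p)(J - p) = 1 + B`. As `J - p ≤ 2J`, this yields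
`1 + B ≤ 2J (J + p)`; hence `√B ≤ (1 + B)/2 ≤ J (J + p)` and `2J (J + p) ≥ 1`, so the kernel
is at most `2J`.
-/

lemma dot3_comm (a b : V3) : dot3 a b = dot3 b a := by
  unfold dot3; ring

lemma dot3_self_nonneg (a : V3) : 0 ≤ dot3 a a := by
  unfold dot3
  nlinarith [mul_self_nonneg (a 0), mul_self_nonneg (a 1), mul_self_nonneg (a 2)]

lemma dot3_smul_left (c : ℝ) (a b : V3) : dot3 (c • a) b = c * dot3 a b := by
  simp only [dot3, Pi.smul_apply, smul_eq_mul]; ring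

lemma dot3_smul_right (c : ℝ) (a b : V3) : dot3 a (c • b) = c * dot3 a b := by
  rw [dot3_comm, dot3_smul_left, dot3_comm]

lemma dot3_cross3_self (a b : V3) :
    dot3 (cross3 a b) (cross3 a b) = dot3 a a * dot3 b b - dot3 a b ^ 2 := by
  simp only [dot3, cross3, Fin.isValue, Matrix.cons_val_zero, Matrix.cons_val_one, Matrix.cons_val]
  ring

lemma sq_dot3_le (a b : V3) : dot3 a b ^ 2 ≤ dot3 a a * dot3 b b := by
  linarith [dot3_cross3_self a b, dot3_self_nonneg (cross3 a b)]

lemma cross3_smul_right (c : ℝ) (a b : V3) : cross3 a (c • b) = c • cross3 a b := by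
  ext i
  fin_cases i <;>
    simp only [cross3, Fin.isValue, Pi.smul_apply, smul_eq_mul, Fin.zero_eta, Fin.mk_one,
      Fin.reduceFinMk, Matrix.cons_val_zero, Matrix.cons_val_one, Matrix.cons_val] <;> ring

lemma enorm3_smul (c : ℝ) (a : V3) : enorm3 (c • a) = |c| * enorm3 a := by
  rw [enorm3, enorm3, dot3_smul_left, dot3_smul_right, ← mul_assoc,
    Real.sqrt_mul (mul_self_nonneg c), Real.sqrt_mul_self_eq_abs]

lemma jap_sq (v : V3) : jap v ^ 2 = 1 + dot3 v v :=
  Real.sq_sqrt (by linarith [dot3_self_nonneg v])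

lemma jap_pos (v : V3) : 0 < jap v :=
  Real.sqrt_pos.2 (by linarith [dot3_self_nonneg v])

lemma jap_add_dot3_pos (v : V3) {ω : V3} (hω : dot3 ω ω ≤ 1) : 0 < jap v + dot3 v ω := by
  have hp : dot3 v ω ^ 2 < jap v ^ 2 := by
    nlinarith [sq_dot3_le v ω, dot3_self_nonneg v, jap_sq v]
  linarith [neg_abs_le (dot3 v ω), abs_lt_of_sq_lt_sq hp (jap_pos v).le]

lemma one_sub_dot3_vhat_self (v : V3) : 1 - dot3 (vhat v) (vhat v) = (jap v ^ 2)⁻¹ := by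
  have hJ := (jap_pos v).ne'
  rw [vhat, dot3_smul_left, dot3_smul_right, ← add_sub_cancel_left 1 (dot3 v v), ← jap_sq]
  field_simp
  ring

lemma magnetic_kernel_eq (v ω : V3) :
    enorm3 (cross3 ω (vhat v)) * (1 - dot3 (vhat v) (vhat v)) / (1 + dot3 (vhat v) ω) ^ 2
      = enorm3 (cross3 ω v) / (jap v * (jap v + dot3 v ω) ^ 2) := by
  have hJ := jap_pos v
  rw [one_sub_dot3_vhat_self, vhat, dot3_smul_left, cross3_smul_right, enorm3_smul,
    abs_of_pos (inv_pos.2 hJ)]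
  rw [show 1 + (jap v)⁻¹ * dot3 v ω = (jap v + dot3 v ω) / jap v by field_simp]
  field_simp

lemma sqrt_div_le_two_mul {J p B : ℝ} (hJ : 0 < J) (hp : 0 < J + p) (hB : 0 ≤ B)
    (h : J ^ 2 = 1 + B + p ^ 2) : √B / (J * (J + p) ^ 2) ≤ 2 * J := by
  have hsum : 1 + B ≤ 2 * J * (J + p) := by nlinarith
  have hamgm : 2 * √B ≤ 1 + B := by nlinarith [Real.sq_sqrt hB, sq_nonneg (√B - 1)]
  rw [div_le_iff₀ (by positivity)]
  calc √B ≤ J * (J + p) * 1 := by linarith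
    _ ≤ J * (J + p) * (2 * J * (J + p)) :=
        mul_le_mul_of_nonneg_left (by linarith) (by positivity)
    _ = 2 * J * (J * (J + p) ^ 2) := by ring

/-- decay of the Glassey–Strauss magnetic bulk kernel. -/
theorem magnetic_bulk_kernel_decay (v ω : V3) (hω : enorm3 ω = 1) :
    enorm3 (cross3 ω (vhat v)) * (1 - dot3 (vhat v) (vhat v)) / (1 + dot3 (vhat v) ω) ^ 2
      ≤ 8 * Real.sqrt (1 + dot3 v v) := by
  have hω1 : dot3 ω ω = 1 := by
    rw [← Real.sq_sqrt (dot3_self_nonneg ω), ← enorm3, hω, one_pow]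
  have hB : dot3 (cross3 ω v) (cross3 ω v) = jap v ^ 2 - 1 - dot3 v ω ^ 2 := by
    rw [dot3_cross3_self, hω1, dot3_comm ω v, jap_sq]; ring
  rw [magnetic_kernel_eq, ← jap]
  calc enorm3 (cross3 ω v) / (jap v * (jap v + dot3 v ω) ^ 2) ≤ 2 * jap v :=
        sqrt_div_le_two_mul (jap_pos v) (jap_add_dot3_pos v hω1.le) (dot3_self_nonneg _)
          (by rw [hB]; ring)
    _ ≤ 8 * jap v := by linarith [jap_pos v]
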